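/- arXiv:2411.14799 — 6 statements merged into one kernel-verified Lean document; each statement's English description precedes it below -/
import Mathlib

section
/- Let X be a real normed space, x ∈ X, and f a supporting functional at x. If h ∈ X satisfies ‖h‖ ≤ t·‖x‖ for some t > 0, then ‖x+h‖² ≥ ‖x‖²/2 + 2‖x‖·f(h) + ‖h‖²/(2t²). -/
/-- If `f` is a supporting functional at `x` and `‖h‖ ≤ t‖x‖` with `t > 0`, then
`‖x+h‖² ≥ ‖x‖²/2 + 2‖x‖·f(h) + ‖h‖²/(2t²)`. -/
theorem stmt1 {X : Type*} [NormedAddCommGroup X] [NormedSpace ℝ X]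
    (x : X) (f : X →L[ℝ] ℝ) (hf1 : ‖f‖ = 1) (hfx : f x = ‖x‖)
    (t : ℝ) (ht : 0 < t) (h : X) (hh : ‖h‖ ≤ t * ‖x‖) :
    ‖x‖ ^ 2 / 2 + 2 * ‖x‖ * f h + ‖h‖ ^ 2 / (2 * t ^ 2) ≤ ‖x + h‖ ^ 2 := by
  have key : ‖x‖ ^ 2 + 2 * ‖x‖ * f h ≤ ‖x + h‖ ^ 2 := by
    have h1 : f (x + h) ≤ ‖x + h‖ := by
      calc f (x + h) ≤ ‖f (x + h)‖ := le_abs_self _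
      _ ≤ ‖f‖ * ‖x + h‖ := f.le_opNorm _
      _ = ‖x + h‖ := by rw [hf1, one_mul]
    have h2 : ‖x‖ + f h ≤ ‖x + h‖ := by
      rw [← hfx]; simpa [map_add] using h1
    rcases le_or_gt 0 (‖x‖ + f h) with hp | hn
    · nlinarith [sq_nonneg (f h)]
    · nlinarith [sq_nonneg (‖x + h‖), norm_nonneg x]
  have hx : ‖h‖ ^ 2 / t ^ 2 ≤ ‖x‖ ^ 2 := by
    rw [div_le_iff₀ (by positivity)]
    nlinarith [norm_nonneg h, norm_nonneg x]
  have : ‖h‖ ^ 2 / (2 * t ^ 2) = (‖h‖ ^ 2 / t ^ 2) / 2 := by ring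
  linarith
end

section
/- There exists an absolute constant c > 0 (one may take c = 1/200) such that for every real normed space X, every x, h ∈ X, and every supporting functional f at x: ‖x+h‖² ≥ ‖x‖²/2 + 2‖x‖·f(h) + c‖h‖². -/
universe u

/-- Lemma 1 of the paper: there is an absolute constant `c > 0` such that for every real
normed space `X`, all `x, h ∈ X` and every supporting functional `f` at `x`,
`‖x+h‖² ≥ ‖x‖²/2 + 2‖x‖·f(h) + c‖h‖²`. -/
theorem stmt3 :
    ∃ c : ℝ, 0 < c ∧
      ∀ (X : Type u) (_ : NormedAddCommGroup X) (_ : NormedSpace ℝ X)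
        (x h : X) (f : X →L[ℝ] ℝ), ‖f‖ = 1 → f x = ‖x‖ →
          ‖x‖ ^ 2 / 2 + 2 * ‖x‖ * f h + c * ‖h‖ ^ 2 ≤ ‖x + h‖ ^ 2 := by
  refine ⟨1/200, by norm_num, ?_⟩
  intro X _ _ x h f hf hfx
  have ht : |f h| ≤ ‖h‖ := by
    have := f.le_opNorm h
    rw [hf, one_mul] at this
    exact this
  have ht' := abs_le.mp ht
  have hN1 : |‖x‖ + f h| ≤ ‖x + h‖ := by
    have := f.le_opNorm (x + h)
    rw [hf, one_mul, map_add, hfx] at this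
    exact this
  have hN1' := abs_le.mp hN1
  have hN2 : ‖h‖ - ‖x‖ ≤ ‖x + h‖ := by
    have : ‖h‖ ≤ ‖x + h‖ + ‖x‖ := by
      calc ‖h‖ = ‖(x + h) - x‖ := by rw [add_sub_cancel_left]
        _ ≤ ‖x + h‖ + ‖x‖ := norm_sub_le _ _
    linarith
  have hxn : (0:ℝ) ≤ ‖x‖ := norm_nonneg x
  have hhn : (0:ℝ) ≤ ‖h‖ := norm_nonneg h
  have hNn : (0:ℝ) ≤ ‖x + h‖ := norm_nonneg _
  rcases le_or_gt ‖h‖ (8 * ‖x‖) with hc | hc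
  · -- ‖x+h‖² ≥ (‖x‖ + f h)², and ‖x‖²/2 ≥ ‖h‖²/128
    have hsq : (‖x‖ + f h) ^ 2 ≤ ‖x + h‖ ^ 2 := by
      have := sq_abs (‖x‖ + f h)
      nlinarith [abs_nonneg (‖x‖ + f h)]
    nlinarith [sq_nonneg (f h)]
  · -- ‖x+h‖ ≥ ‖h‖ - ‖x‖ ≥ 0
    have hpos : (0:ℝ) ≤ ‖h‖ - ‖x‖ := by linarith
    nlinarith [sq_nonneg (‖h‖ - 8 * ‖x‖), sq_nonneg ‖x‖]
end

section
/- Let N ∈ ℕ, s ∈ {1,…,N}, 1 ≤ q ≤ ∞, and ν_j > 0, 1 ≤ p_j ≤ ∞ for j = 1,…,r. Let X be ℝ^N with norm ‖x‖_X = max_{1≤j≤r} ν_j^{-1}‖x‖_{p_j}, and let x̂ ∈ ℝ^N have coordinates x̂_i = s^{-1/q'} for 1 ≤ i ≤ s and 0 otherwise, where 1/q' = 1 - 1/q. Then the dual norm of x̂ with respect to X equals min_{1≤j≤r} ν_j·s^{1/q - 1/p_j}. -/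
open scoped ENNReal

/-- The `ℓ_p` norm on `ℝ^N`, `p ∈ [1,∞]`, via the `PiLp` norm. -/
noncomputable def lpNorm {N : ℕ} (p : ℝ≥0∞) (x : Fin N → ℝ) : ℝ :=
  ‖(WithLp.equiv p (Fin N → ℝ)).symm x‖

lemma aux_sum_le {N : ℕ} (p : ℝ≥0∞) (hp : 1 ≤ p) (x : Fin N → ℝ) (S : Finset (Fin N)) :
    ∑ i ∈ S, x i ≤ lpNorm p x * (S.card : ℝ) ^ (1 - (1/p).toReal) := by
  rcases eq_or_ne p ∞ with h | h
  · subst h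
    simp only [lpNorm, one_div, ENNReal.inv_top, ENNReal.toReal_zero, sub_zero, Real.rpow_one]
    have hb : ∀ i, x i ≤ ‖(WithLp.equiv ∞ (Fin N → ℝ)).symm x‖ := by
      intro i
      calc x i ≤ ‖x i‖ := le_abs_self _
      _ = ‖(WithLp.equiv ∞ (Fin N → ℝ)).symm x i‖ := rfl
      _ ≤ _ := by
        rw [PiLp.norm_eq_ciSup]
        exact le_ciSup (f := fun j => ‖(WithLp.equiv ∞ (Fin N → ℝ)).symm x j‖)
          (Set.Finite.bddAbove (Set.finite_range _)) i
    calc ∑ i ∈ S, x i ≤ ∑ _i ∈ S, ‖(WithLp.equiv ∞ (Fin N → ℝ)).symm x‖ :=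
          Finset.sum_le_sum fun i _ => hb i
    _ = _ := by rw [Finset.sum_const, nsmul_eq_mul, mul_comm]
  · have hpr : 1 ≤ p.toReal := by
      rw [← ENNReal.toReal_one]
      exact ENNReal.toReal_mono h hp
    have hpr0 : 0 < p.toReal := lt_of_lt_of_le one_pos hpr
    set pr := p.toReal with hprdef
    have hnorm : lpNorm p x = (∑ i, |x i| ^ pr) ^ (1/pr) := by
      rw [lpNorm, PiLp.norm_eq_sum hpr0]
      simp [WithLp.equiv_symm_apply, PiLp.toLp_apply, Real.norm_eq_abs, hprdef]
    have hinv : (1/p).toReal = 1/pr := by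
      rw [one_div, one_div, ENNReal.toReal_inv]
    set A := ∑ i ∈ S, |x i| with hA
    have hA0 : 0 ≤ A := Finset.sum_nonneg fun i _ => abs_nonneg _
    have key : A ^ pr ≤ (S.card : ℝ) ^ (pr - 1) * ∑ i ∈ S, |x i| ^ pr :=
      Real.rpow_sum_le_const_mul_sum_rpow S x hpr
    have h2 : ∑ i ∈ S, |x i| ^ pr ≤ ∑ i, |x i| ^ pr :=
      Finset.sum_le_sum_of_subset_of_nonneg (Finset.subset_univ S)
        fun i _ _ => Real.rpow_nonneg (abs_nonneg _) _
    have h3 : A ^ pr ≤ (S.card : ℝ) ^ (pr - 1) * ∑ i, |x i| ^ pr :=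
      key.trans (by gcongr)
    have h4 : A ≤ ((S.card : ℝ) ^ (pr - 1) * ∑ i, |x i| ^ pr) ^ (1/pr) := by
      have := Real.rpow_le_rpow (Real.rpow_nonneg hA0 _) h3 (by positivity : (0:ℝ) ≤ pr⁻¹)
      rw [Real.rpow_rpow_inv hA0 (ne_of_gt hpr0)] at this
      rw [one_div]
      exact this
    have h5 : ((S.card : ℝ) ^ (pr - 1) * ∑ i, |x i| ^ pr) ^ (1/pr)
        = (∑ i, |x i| ^ pr) ^ (1/pr) * (S.card : ℝ) ^ (1 - 1/pr) := by
      rw [Real.mul_rpow (Real.rpow_nonneg (Nat.cast_nonneg _) _)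
        (Finset.sum_nonneg fun i _ => Real.rpow_nonneg (abs_nonneg _) _),
        ← Real.rpow_mul (Nat.cast_nonneg _), mul_comm]
      congr 1
      field_simp
    calc ∑ i ∈ S, x i ≤ A := Finset.sum_le_sum fun i _ => le_abs_self _
    _ ≤ _ := h4
    _ = _ := by rw [h5, hnorm, hinv]

lemma aux_lpNorm_ind {N : ℕ} (p : ℝ≥0∞) (hp : 1 ≤ p) (m : ℝ) (hm : 0 ≤ m)
    (S : Finset (Fin N)) (hS : S.Nonempty) :
    lpNorm p (fun i => if i ∈ S then m else 0) = m * (S.card : ℝ) ^ (1/p).toReal := by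
  obtain ⟨i₀, hi₀⟩ := hS
  rcases eq_or_ne p ∞ with h | h
  · subst h
    simp only [one_div, ENNReal.inv_top, ENNReal.toReal_zero, Real.rpow_zero, mul_one]
    rw [lpNorm, PiLp.norm_eq_ciSup]
    have : Nonempty (Fin N) := ⟨i₀⟩
    apply le_antisymm
    · apply ciSup_le
      intro i
      show ‖if i ∈ S then m else 0‖ ≤ m
      split
      · rw [Real.norm_eq_abs, abs_of_nonneg hm]
      · simpa using hm
    · have := le_ciSup (Set.Finite.bddAbove (Set.finite_range
        fun i => ‖(WithLp.equiv ∞ (Fin N → ℝ)).symm (fun i => if i ∈ S then m else 0) i‖)) i₀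
      simpa [WithLp.equiv_symm_apply, PiLp.toLp_apply, hi₀, Real.norm_eq_abs, abs_of_nonneg hm] using this
  · have hpr : 1 ≤ p.toReal := by
      rw [← ENNReal.toReal_one]
      exact ENNReal.toReal_mono h hp
    have hpr0 : 0 < p.toReal := lt_of_lt_of_le one_pos hpr
    set pr := p.toReal with hprdef
    have hinv : (1/p).toReal = 1/pr := by rw [one_div, one_div, ENNReal.toReal_inv]
    rw [lpNorm, PiLp.norm_eq_sum hpr0, hinv]
    have : ∀ i : Fin N, ‖(WithLp.equiv p (Fin N → ℝ)).symm (fun i => if i ∈ S then m else 0) i‖ ^ pr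
        = if i ∈ S then m ^ pr else 0 := by
      intro i
      rw [WithLp.equiv_symm_apply, PiLp.toLp_apply]
      split
      · rw [Real.norm_eq_abs, abs_of_nonneg hm]
      · rw [norm_zero, Real.zero_rpow (ne_of_gt hpr0)]
    rw [Finset.sum_congr rfl fun i _ => this i]
    rw [Finset.sum_ite_mem, Finset.univ_inter, Finset.sum_const, nsmul_eq_mul]
    rw [Real.mul_rpow (Nat.cast_nonneg _) (Real.rpow_nonneg hm _)]
    rw [show ((m:ℝ)^pr)^(1/pr) = m by rw [one_div, Real.rpow_rpow_inv hm (ne_of_gt hpr0)]]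
    ring

/-- Let `X = (ℝ^N, max_j ν_j⁻¹‖·‖_{p_j})` and let `x̂` have its first `s` coordinates equal
to `s^{-1/q'}` (i.e. `s^{1/q - 1}`) and the rest `0`. Then the dual norm of `x̂`,
`sup {⟨x, x̂⟩ : ‖x‖_X ≤ 1}`, equals `min_j ν_j s^{1/q - 1/p_j}`. -/
theorem stmt5 (N r s : ℕ) (hr : 0 < r) (hs1 : 1 ≤ s) (hsN : s ≤ N)
    (q : ℝ≥0∞) (hq : 1 ≤ q)
    (ν : Fin r → ℝ) (hν : ∀ j, 0 < ν j)
    (p : Fin r → ℝ≥0∞) (hp : ∀ j, 1 ≤ p j) :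
    sSup {t : ℝ | ∃ x : Fin N → ℝ,
        (⨆ j, (ν j)⁻¹ * lpNorm (p j) x) ≤ 1 ∧
        t = ∑ i, x i * (if (i : ℕ) < s then (s : ℝ) ^ ((1 / q).toReal - 1) else 0)} =
      ⨅ j, ν j * (s : ℝ) ^ ((1 / q).toReal - (1 / p j).toReal) := by
  have hNr : Nonempty (Fin r) := ⟨⟨0, hr⟩⟩
  have hs0 : (0:ℝ) < s := by
    have : 0 < s := by omega
    exact_mod_cast this
  set qr := (1/q).toReal with hqr
  set S := Finset.univ.filter (fun i : Fin N => (i:ℕ) < s) with hSdef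
  have hScard : S.card = s := by
    have hmap : S = Finset.map (Fin.castLEEmb hsN) Finset.univ := by
      ext a
      simp only [hSdef, Finset.mem_filter, Finset.mem_univ, true_and, Finset.mem_map]
      constructor
      · intro h; exact ⟨⟨a, h⟩, rfl⟩
      · rintro ⟨b, rfl⟩; exact b.isLt
    rw [hmap, Finset.card_map, Finset.card_univ, Fintype.card_fin]
  have hSne : S.Nonempty := Finset.card_pos.mp (by rw [hScard]; omega)
  set f := fun j => ν j * (s:ℝ) ^ (qr - (1/p j).toReal) with hf
  have hfact : ∀ j, f j = (ν j * (s:ℝ) ^ (-(1/p j).toReal)) * (s:ℝ) ^ qr := by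
    intro j
    rw [hf, mul_assoc, ← Real.rpow_add hs0]
    congr 2
    ring
  obtain ⟨j₀, -, hj₀⟩ := Finset.exists_min_image Finset.univ f ⟨⟨0, hr⟩, Finset.mem_univ _⟩
  have hj₀' : ∀ j, f j₀ ≤ f j := fun j => hj₀ j (Finset.mem_univ j)
  have hinf : (⨅ j, f j) = f j₀ :=
    le_antisymm (ciInf_le (Set.Finite.bddBelow (Set.finite_range f)) j₀) (le_ciInf hj₀')
  rw [hinf]
  apply IsGreatest.csSup_eq
  constructor
  · -- membership: the witness attains f j₀
    set m := ν j₀ * (s:ℝ) ^ (-(1/p j₀).toReal) with hm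
    have hm0 : 0 < m := by
      have := hν j₀
      positivity
    have hg : ∀ j, m ≤ ν j * (s:ℝ) ^ (-(1/p j).toReal) := by
      intro j
      have h1 : f j₀ ≤ f j := hj₀' j
      rw [hfact j₀, hfact j] at h1
      exact le_of_mul_le_mul_right h1 (Real.rpow_pos_of_pos hs0 _)
    refine ⟨fun i => if i ∈ S then m else 0, ?_, ?_⟩
    · apply ciSup_le
      intro j
      rw [aux_lpNorm_ind (p j) (hp j) m hm0.le S hSne, hScard]
      rw [inv_mul_le_iff₀ (hν j), mul_one]
      calc m * (s:ℝ) ^ (1/p j).toReal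
          ≤ (ν j * (s:ℝ) ^ (-(1/p j).toReal)) * (s:ℝ) ^ (1/p j).toReal :=
            mul_le_mul_of_nonneg_right (hg j) (Real.rpow_nonneg hs0.le _)
        _ = ν j := by
            rw [mul_assoc, ← Real.rpow_add hs0]
            norm_num
    · have hiff : ∀ i : Fin N, (i ∈ S) = ((i:ℕ) < s) := by
        intro i; simp [hSdef]
      calc f j₀ = m * (s:ℝ) ^ qr := hfact j₀
        _ = m * ((s:ℝ) ^ (1:ℝ) * (s:ℝ) ^ (qr - 1)) := by
            rw [← Real.rpow_add hs0]; norm_num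
        _ = (S.card : ℝ) * (m * (s:ℝ) ^ (qr - 1)) := by
            rw [hScard, Real.rpow_one]; ring
        _ = ∑ i ∈ S, m * (s:ℝ) ^ (qr - 1) := by
            rw [Finset.sum_const, nsmul_eq_mul]
        _ = ∑ i, (if i ∈ S then m * (s:ℝ) ^ (qr - 1) else 0) := by
            rw [Finset.sum_ite_mem, Finset.univ_inter]
        _ = ∑ i, (if i ∈ S then m else 0) * (if (i:ℕ) < s then (s:ℝ) ^ (qr - 1) else 0) := by
            apply Finset.sum_congr rfl
            intro i _
            by_cases h : (i:ℕ) < s <;> simp [hSdef, h]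
  · -- upper bound
    rintro t ⟨x, hx, rfl⟩
    set j := j₀ with hj
    have hxj : lpNorm (p j) x ≤ ν j := by
      have h1 : (ν j)⁻¹ * lpNorm (p j) x ≤ 1 :=
        le_trans (le_ciSup (f := fun j => (ν j)⁻¹ * lpNorm (p j) x)
          (Set.Finite.bddAbove (Set.finite_range _)) j) hx
      rw [inv_mul_le_iff₀ (hν j), mul_one] at h1
      exact h1
    have hsum : ∑ i, x i * (if (i:ℕ) < s then (s:ℝ) ^ (qr - 1) else 0)
        = (∑ i ∈ S, x i) * (s:ℝ) ^ (qr - 1) := by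
      simp only [mul_ite, mul_zero]
      rw [← Finset.sum_filter, ← Finset.sum_mul, hSdef]
    rw [hsum]
    have hL1 := aux_sum_le (p j) (hp j) x S
    rw [hScard] at hL1
    calc (∑ i ∈ S, x i) * (s:ℝ) ^ (qr - 1)
        ≤ (lpNorm (p j) x * (s:ℝ) ^ (1 - (1/p j).toReal)) * (s:ℝ) ^ (qr - 1) :=
          mul_le_mul_of_nonneg_right hL1 (Real.rpow_nonneg hs0.le _)
      _ ≤ (ν j * (s:ℝ) ^ (1 - (1/p j).toReal)) * (s:ℝ) ^ (qr - 1) :=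
          mul_le_mul_of_nonneg_right
            (mul_le_mul_of_nonneg_right hxj (Real.rpow_nonneg hs0.le _))
            (Real.rpow_nonneg hs0.le _)
      _ = f j := by
          rw [hf, mul_assoc, ← Real.rpow_add hs0]
          congr 2
          ring
end

section
/- With X = (ℝ^N, max_{1≤j≤r} ν_j^{-1}‖·‖_{p_j}) and x̂ as the vector with first s coordinates equal to s^{-1/q'} and rest 0, set A = min_j ν_j s^{1/q-1/p_j} and t = A·s^{-1/q}. Then the vector α with first s coordinates equal to t and rest 0 satisfies ‖α‖_X = 1 and ⟨α, x̂⟩ = ‖x̂‖_{X*}, i.e., y ↦ ⟨α, y⟩ is a supporting functional at x̂ in the dual space X*. -/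
open scoped ENNReal

lemma card_filt (N s : ℕ) (hsN : s ≤ N) :
    (Finset.univ.filter (fun i : Fin N => (i : ℕ) < s)).card = s := by
  have : (Finset.univ.filter (fun i : Fin N => (i : ℕ) < s))
      = Finset.map (Fin.castLEEmb hsN) Finset.univ := by
    ext i
    simp only [Finset.mem_filter, Finset.mem_univ, true_and, Finset.mem_map, Fin.castLEEmb,
      Function.Embedding.coeFn_mk]
    constructor
    · intro h; exact ⟨⟨i, h⟩, by ext; simp⟩
    · rintro ⟨j, -, rfl⟩; simp
  simp [this]

lemma lpNorm_const_front {N : ℕ} (s : ℕ) (hs1 : 1 ≤ s) (hsN : s ≤ N)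
    (p : ℝ≥0∞) (hp : 1 ≤ p) (c : ℝ) (hc : 0 ≤ c) :
    ‖(WithLp.equiv p (Fin N → ℝ)).symm (fun i : Fin N => if (i : ℕ) < s then c else 0)‖
      = c * (s : ℝ) ^ (1 / p).toReal := by
  have hs0 : (0:ℝ) < (s:ℝ) := by positivity
  have hN : 0 < N := lt_of_lt_of_le hs1 hsN
  have : Nonempty (Fin N) := ⟨⟨0, hN⟩⟩
  rcases eq_or_ne p ∞ with rfl | hptop
  · rw [PiLp.norm_eq_ciSup]
    simp only [one_div, ENNReal.inv_top, ENNReal.toReal_zero, Real.rpow_zero, mul_one]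
    apply le_antisymm
    · apply ciSup_le
      intro i
      rw [WithLp.equiv_symm_apply, PiLp.toLp_apply]
      by_cases h : (i : ℕ) < s <;> simp [h, abs_of_nonneg hc, hc]
    · refine le_trans ?_ (le_ciSup (Finite.bddAbove_range
        (fun i : Fin N => ‖((WithLp.equiv ⊤ (Fin N → ℝ)).symm (fun i : Fin N => if (i : ℕ) < s then c else 0)) i‖))
        (⟨0, hN⟩ : Fin N))
      have h0 : ((0 : ℕ)) < s := hs1
      rw [WithLp.equiv_symm_apply, PiLp.toLp_apply]
      simp [h0, abs_of_nonneg hc]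
  · have hpr : 0 < p.toReal := ENNReal.toReal_pos (by intro h; rw [h] at hp; simp at hp) hptop
    rw [PiLp.norm_eq_sum hpr]
    have hsum : ∑ i : Fin N, ‖((WithLp.equiv p (Fin N → ℝ)).symm (fun i : Fin N => if (i : ℕ) < s then c else 0)) i‖ ^ p.toReal
        = (s : ℝ) * c ^ p.toReal := by
      rw [← Finset.sum_filter_add_sum_filter_not Finset.univ (fun i : Fin N => (i : ℕ) < s)]
      have h1 : ∀ i ∈ Finset.univ.filter (fun i : Fin N => (i : ℕ) < s),
          ‖((WithLp.equiv p (Fin N → ℝ)).symm (fun i : Fin N => if (i : ℕ) < s then c else 0)) i‖ ^ p.toReal = c ^ p.toReal := by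
        intro i hi
        simp only [Finset.mem_filter] at hi
        rw [WithLp.equiv_symm_apply, PiLp.toLp_apply]
        simp [hi.2, abs_of_nonneg hc]
      have h2 : ∀ i ∈ Finset.univ.filter (fun i : Fin N => ¬ (i : ℕ) < s),
          ‖((WithLp.equiv p (Fin N → ℝ)).symm (fun i : Fin N => if (i : ℕ) < s then c else 0)) i‖ ^ p.toReal = 0 := by
        intro i hi
        simp only [Finset.mem_filter] at hi
        rw [WithLp.equiv_symm_apply, PiLp.toLp_apply]
        simp [hi.2, Real.zero_rpow (ne_of_gt hpr)]
      rw [Finset.sum_congr rfl h1, Finset.sum_congr rfl h2, Finset.sum_const, Finset.sum_const,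
        card_filt N s hsN]
      simp [mul_comm]
    rw [hsum]
    rw [Real.mul_rpow (le_of_lt hs0) (Real.rpow_nonneg hc _)]
    rw [← Real.rpow_mul hc, mul_one_div, div_self (ne_of_gt hpr), Real.rpow_one]
    rw [show (1/p).toReal = p.toReal⁻¹ by simp [one_div, ENNReal.toReal_inv], mul_comm, one_div]

lemma holder_front {N : ℕ} (s : ℕ) (hs1 : 1 ≤ s) (hsN : s ≤ N)
    (p : ℝ≥0∞) (hp : 1 ≤ p) (x : Fin N → ℝ) :
    ∑ i ∈ Finset.univ.filter (fun i : Fin N => (i : ℕ) < s), x i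
      ≤ (s : ℝ) ^ (1 - (1 / p).toReal) * ‖(WithLp.equiv p (Fin N → ℝ)).symm x‖ := by
  have hs0 : (0:ℝ) < (s:ℝ) := by positivity
  have hN : 0 < N := lt_of_lt_of_le hs1 hsN
  have hne : Nonempty (Fin N) := ⟨⟨0, hN⟩⟩
  rcases eq_or_ne p ∞ with rfl | hptop
  · rw [PiLp.norm_eq_ciSup]
    simp only [one_div, ENNReal.inv_top, ENNReal.toReal_zero, sub_zero, Real.rpow_one]
    have hb : ∀ i ∈ Finset.univ.filter (fun i : Fin N => (i : ℕ) < s),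
        x i ≤ ⨆ i, ‖((WithLp.equiv ⊤ (Fin N → ℝ)).symm x) i‖ := by
      intro i _
      refine le_trans (le_abs_self _) ?_
      refine le_trans (le_of_eq ?_) (le_ciSup (Finite.bddAbove_range _) i)
      rw [WithLp.equiv_symm_apply, PiLp.toLp_apply, Real.norm_eq_abs]
    calc ∑ i ∈ Finset.univ.filter (fun i : Fin N => (i : ℕ) < s), x i
        ≤ ∑ i ∈ Finset.univ.filter (fun i : Fin N => (i : ℕ) < s),
            (⨆ i, ‖((WithLp.equiv ⊤ (Fin N → ℝ)).symm x) i‖) := Finset.sum_le_sum hb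
      _ = (s : ℝ) * (⨆ i, ‖((WithLp.equiv ⊤ (Fin N → ℝ)).symm x) i‖) := by
          rw [Finset.sum_const, card_filt N s hsN, nsmul_eq_mul]
  · have hpr1 : 1 ≤ p.toReal := by
      rw [← ENNReal.toReal_one]
      exact ENNReal.toReal_mono hptop hp
    have hpr : 0 < p.toReal := lt_of_lt_of_le one_pos hpr1
    have hinv : (1 / p).toReal = 1 / p.toReal := by
      simp [one_div, ENNReal.toReal_inv]
    rw [PiLp.norm_eq_sum hpr, hinv]
    have hnorm : ∀ i : Fin N, ‖((WithLp.equiv p (Fin N → ℝ)).symm x) i‖ = |x i| := by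
      intro i; rw [WithLp.equiv_symm_apply, PiLp.toLp_apply, Real.norm_eq_abs]
    simp only [hnorm]
    have hsub : (∑ i ∈ Finset.univ.filter (fun i : Fin N => (i : ℕ) < s), |x i| ^ p.toReal) ^ (1 / p.toReal)
        ≤ (∑ i : Fin N, |x i| ^ p.toReal) ^ (1 / p.toReal) := by
      apply Real.rpow_le_rpow
      · positivity
      · exact Finset.sum_le_sum_of_subset_of_nonneg (Finset.subset_univ _)
          (fun i _ _ => by positivity)
      · positivity
    rcases eq_or_lt_of_le hpr1 with hpr1' | hpr1'
    · -- p.toReal = 1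
      rw [← hpr1']
      simp only [Real.rpow_one, sub_self, Real.rpow_zero, one_mul, ne_eq, one_ne_zero,
        not_false_eq_true, div_self]
      calc ∑ i ∈ Finset.univ.filter (fun i : Fin N => (i : ℕ) < s), x i
          ≤ ∑ i ∈ Finset.univ.filter (fun i : Fin N => (i : ℕ) < s), |x i| :=
            Finset.sum_le_sum (fun i _ => le_abs_self _)
        _ ≤ ∑ i : Fin N, |x i| := Finset.sum_le_sum_of_subset_of_nonneg (Finset.subset_univ _)
            (fun i _ _ => abs_nonneg _)
    · -- 1 < p.toReal
      set pr := p.toReal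
      have hconj : pr.HolderConjugate (pr / (pr - 1)) := Real.HolderConjugate.conjExponent hpr1'
      have key := Real.inner_le_Lp_mul_Lq (Finset.univ.filter (fun i : Fin N => (i : ℕ) < s))
        x (fun _ => (1:ℝ)) hconj
      simp only [mul_one, abs_one] at key
      have hone : (∑ i ∈ Finset.univ.filter (fun i : Fin N => (i : ℕ) < s),
          (1:ℝ) ^ (pr / (pr - 1))) ^ (1 / (pr / (pr - 1))) = (s : ℝ) ^ (1 - 1 / pr) := by
        rw [Finset.sum_congr rfl (fun i _ => Real.one_rpow _), Finset.sum_const,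
          card_filt N s hsN, nsmul_eq_mul, mul_one]
        congr 1
        rw [one_div_div]
        field_simp
      rw [hone] at key
      refine le_trans key ?_
      rw [mul_comm]
      exact mul_le_mul_of_nonneg_left hsub (by positivity)

/-- With `X = (ℝ^N, max_j ν_j⁻¹‖·‖_{p_j})`, `xhat` the vector with first `s` coordinates
`s^{-1/q'} = s^{1/q-1}` and rest `0`, `A = min_j ν_j s^{1/q-1/p_j}` and `t = A·s^{-1/q}`,
the vector `α` with first `s` coordinates `t` and rest `0` satisfies `‖α‖_X = 1` and
`⟨α, xhat⟩ = ‖xhat‖_{X*}`, i.e. `⟨α, ·⟩` is a supporting functional at `xhat` in `X*`. -/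
theorem stmt6 (N r s : ℕ) (hr : 0 < r) (hs1 : 1 ≤ s) (hsN : s ≤ N)
    (q : ℝ≥0∞) (hq : 1 ≤ q)
    (ν : Fin r → ℝ) (hν : ∀ j, 0 < ν j)
    (p : Fin r → ℝ≥0∞) (hp : ∀ j, 1 ≤ p j)
    (A t : ℝ) (hA : A = ⨅ j, ν j * (s : ℝ) ^ ((1 / q).toReal - (1 / p j).toReal))
    (ht : t = A * (s : ℝ) ^ (-(1 / q).toReal))
    (α xhat : Fin N → ℝ)
    (hα : α = fun i : Fin N => if (i : ℕ) < s then t else 0)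
    (hxhat : xhat = fun i : Fin N => if (i : ℕ) < s then (s : ℝ) ^ ((1 / q).toReal - 1) else 0) :
    (⨆ j, (ν j)⁻¹ * lpNorm (p j) α) = 1 ∧
    (∑ i, α i * xhat i) =
      sSup {u : ℝ | ∃ x : Fin N → ℝ,
        (⨆ j, (ν j)⁻¹ * lpNorm (p j) x) ≤ 1 ∧ u = ∑ i, x i * xhat i} := by
  have hs0 : (0:ℝ) < (s:ℝ) := by positivity
  have hner : Nonempty (Fin r) := Fin.pos_iff_nonempty.mp hr
  set c : ℝ := (1 / q).toReal with hcdef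
  set g : Fin r → ℝ := fun j => ν j * (s : ℝ) ^ (c - (1 / p j).toReal) with hgdef
  have hgpos : ∀ j, 0 < g j := fun j => mul_pos (hν j) (Real.rpow_pos_of_pos hs0 _)
  obtain ⟨j0, hj0⟩ := Finite.exists_min g
  have hAeq : A = g j0 := by
    rw [hA]
    exact le_antisymm (ciInf_le (Finite.bddBelow_range g) j0) (le_ciInf hj0)
  have hApos : 0 < A := hAeq ▸ hgpos j0
  have hAle : ∀ j, A ≤ g j := fun j => hAeq ▸ hj0 j
  have ht0 : 0 ≤ t := by
    rw [ht]; positivity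
  -- norm of α in each ℓ_p
  have hnormα : ∀ j, lpNorm (p j) α = t * (s : ℝ) ^ (1 / p j).toReal := by
    intro j
    rw [lpNorm, hα]
    exact lpNorm_const_front s hs1 hsN (p j) (hp j) t ht0
  have hterm : ∀ j, (ν j)⁻¹ * lpNorm (p j) α = A * (g j)⁻¹ := by
    intro j
    rw [hnormα j, ht, hgdef]
    rw [mul_inv, ← Real.rpow_neg (le_of_lt hs0), neg_sub]
    rw [show A * (s:ℝ)^(-c) * (s:ℝ)^((1/p j).toReal)
        = A * ((s:ℝ)^(-c) * (s:ℝ)^((1/p j).toReal)) by ring,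
      ← Real.rpow_add hs0, show -c + (1/p j).toReal = (1/p j).toReal - c by ring]
    ring
  have part1 : (⨆ j, (ν j)⁻¹ * lpNorm (p j) α) = 1 := by
    apply le_antisymm
    · apply ciSup_le
      intro j
      rw [hterm j, ← div_eq_mul_inv]
      exact div_le_one_of_le₀ (hAle j) (le_of_lt (hgpos j))
    · refine le_ciSup_of_le (Finite.bddAbove_range _) j0 ?_
      rw [hterm j0, ← hAeq, mul_inv_cancel₀ (ne_of_gt hApos)]
  refine ⟨part1, ?_⟩
  -- the pairing with α equals A
  have hsum : (∑ i, α i * xhat i) = A := by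
    rw [hα, hxhat]
    have : ∀ i : Fin N, (if (i : ℕ) < s then t else 0) *
        (if (i : ℕ) < s then (s : ℝ) ^ (c - 1) else 0)
        = if (i : ℕ) < s then t * (s : ℝ) ^ (c - 1) else 0 := by
      intro i; by_cases h : (i : ℕ) < s <;> simp [h]
    rw [Finset.sum_congr rfl (fun i _ => this i), ← Finset.sum_filter, Finset.sum_const,
      card_filt N s hsN, nsmul_eq_mul, ht]
    have h2 : (s:ℝ) * (A * (s:ℝ)^(-c) * (s:ℝ)^(c-1))
        = A * ((s:ℝ)^(1:ℝ) * ((s:ℝ)^(-c) * (s:ℝ)^(c-1))) := by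
      rw [Real.rpow_one]; ring
    rw [h2, ← Real.rpow_add hs0, ← Real.rpow_add hs0,
      show (1:ℝ) + (-c + (c-1)) = 0 by ring, Real.rpow_zero, mul_one]
  rw [hsum]
  -- upper bound
  have hub : ∀ u ∈ {u : ℝ | ∃ x : Fin N → ℝ,
      (⨆ j, (ν j)⁻¹ * lpNorm (p j) x) ≤ 1 ∧ u = ∑ i, x i * xhat i}, u ≤ A := by
    rintro u ⟨x, hx1, rfl⟩
    have hxj : ∀ j, lpNorm (p j) x ≤ ν j := by
      intro j
      have h1 : (ν j)⁻¹ * lpNorm (p j) x ≤ 1 :=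
        le_trans (le_ciSup (f := fun j => (ν j)⁻¹ * lpNorm (p j) x) (Finite.bddAbove_range _) j) hx1
      have := mul_le_mul_of_nonneg_left h1 (le_of_lt (hν j))
      rwa [mul_one, ← mul_assoc, mul_inv_cancel₀ (ne_of_gt (hν j)), one_mul] at this
    have hsum2 : (∑ i, x i * xhat i)
        = (∑ i ∈ Finset.univ.filter (fun i : Fin N => (i : ℕ) < s), x i) * (s : ℝ) ^ (c - 1) := by
      rw [hxhat]
      rw [show (∑ i, x i * (if (i : ℕ) < s then (s:ℝ)^(c-1) else 0))
          = ∑ i : Fin N, (if (i : ℕ) < s then x i * (s:ℝ)^(c-1) else 0) from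
        Finset.sum_congr rfl (fun i _ => by by_cases h : (i : ℕ) < s <;> simp [h])]
      rw [← Finset.sum_filter, ← Finset.sum_mul]
    rw [hsum2, hA]
    apply le_ciInf
    intro j
    have hh := holder_front s hs1 hsN (p j) (hp j) x
    calc (∑ i ∈ Finset.univ.filter (fun i : Fin N => (i : ℕ) < s), x i) * (s : ℝ) ^ (c - 1)
        ≤ ((s : ℝ) ^ (1 - (1 / p j).toReal) * lpNorm (p j) x) * (s : ℝ) ^ (c - 1) :=
          mul_le_mul_of_nonneg_right hh (le_of_lt (Real.rpow_pos_of_pos hs0 _))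
      _ ≤ ((s : ℝ) ^ (1 - (1 / p j).toReal) * ν j) * (s : ℝ) ^ (c - 1) := by
          apply mul_le_mul_of_nonneg_right _ (le_of_lt (Real.rpow_pos_of_pos hs0 _))
          exact mul_le_mul_of_nonneg_left (hxj j) (le_of_lt (Real.rpow_pos_of_pos hs0 _))
      _ = ν j * (s : ℝ) ^ (c - (1 / p j).toReal) := by
          rw [mul_comm _ (ν j), mul_assoc, ← Real.rpow_add hs0]
          ring_nf
  -- membership
  have hmem : A ∈ {u : ℝ | ∃ x : Fin N → ℝ,
      (⨆ j, (ν j)⁻¹ * lpNorm (p j) x) ≤ 1 ∧ u = ∑ i, x i * xhat i} :=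
    ⟨α, le_of_eq part1, hsum.symm⟩
  exact le_antisymm (le_csSup ⟨A, hub⟩ hmem) (csSup_le ⟨A, hmem⟩ hub)
end

section
/- Let H ⊆ S_N be a subgroup acting transitively on {1,…,N}, G = H × {-1,1}^N acting on ℝ^N by (σ,ε)(x) = (ε_i x_{σ(i)})_i. Let b ∈ ℝ^N, φ_i(g) = (gb)_i, and let P be the orthogonal projection in L²(G) (normalized counting measure) onto a subspace Z of dimension ≤ n. Then (Σ_{i=1}^N ‖Pφ_i‖²_{L²(G)})^{1/2} ≤ n^{1/2}·‖b‖_2 / N^{1/2}. -/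
/-!
Averaging over the signs makes the coordinate functions `φ i` pairwise orthogonal in `L²(G)`, and
transitivity of `H` gives them all the same norm, `‖φ i‖² = ‖b‖₂² / N`. For an orthogonal family
of equal norms `r`, Bessel's inequality applied to an orthonormal basis `e` of the target subspace
gives `∑ i ‖P φ i‖² = ∑ k ∑ i ⟪φ i, e k⟫² ≤ n r²`.
-/

open Module
open scoped RealInnerProductSpace

section Bessel

variable {E : Type*} [NormedAddCommGroup E] [InnerProductSpace ℝ E]
  {ι : Type*} [Fintype ι] {φ : ι → E} {r : ℝ}

theorem sum_sq_inner_le_of_orthogonal (horth : Pairwise fun i j ↦ ⟪φ i, φ j⟫ = 0)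
    (hnorm : ∀ i, ‖φ i‖ = r) (u : E) :
    ∑ i, ⟪φ i, u⟫ ^ 2 ≤ r ^ 2 * ‖u‖ ^ 2 := by
  rcases eq_or_ne r 0 with rfl | hr
  · simp [fun i ↦ norm_eq_zero.mp (hnorm i)]
  have hψ : Orthonormal ℝ fun i ↦ r⁻¹ • φ i := by
    refine ⟨fun i ↦ ?_, fun i j hij ↦ ?_⟩
    · rw [norm_smul, hnorm, norm_inv, ← hnorm i, norm_norm, inv_mul_cancel₀ (hnorm i ▸ hr)]
    · simp [real_inner_smul_left, real_inner_smul_right, horth hij]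
  calc ∑ i, ⟪φ i, u⟫ ^ 2 = r ^ 2 * ∑ i, ‖⟪r⁻¹ • φ i, u⟫‖ ^ 2 := by
        simp only [Finset.mul_sum, real_inner_smul_left, Real.norm_eq_abs, sq_abs]
        refine Finset.sum_congr rfl fun i _ ↦ ?_
        field_simp
    _ ≤ r ^ 2 * ‖u‖ ^ 2 := by gcongr; exact hψ.sum_inner_products_le u

theorem sum_norm_sq_starProjection_le [FiniteDimensional ℝ E] (K : Submodule ℝ E)
    (horth : Pairwise fun i j ↦ ⟪φ i, φ j⟫ = 0) (hnorm : ∀ i, ‖φ i‖ = r) :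
    ∑ i, ‖K.starProjection (φ i)‖ ^ 2 ≤ finrank ℝ K * r ^ 2 := by
  let e := stdOrthonormalBasis ℝ K
  calc ∑ i, ‖K.starProjection (φ i)‖ ^ 2
      = ∑ k, ∑ i, ⟪φ i, (e k : E)⟫ ^ 2 := by
        rw [Finset.sum_comm]
        refine Finset.sum_congr rfl fun i _ ↦ ?_
        rw [Submodule.starProjection_apply, Submodule.norm_coe, ← e.sum_sq_inner_right]
        simp only [Submodule.inner_orthogonalProjectionOnto_eq_of_mem_left, real_inner_comm]
    _ ≤ ∑ k, r ^ 2 * ‖(e k : E)‖ ^ 2 :=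
        Finset.sum_le_sum fun k _ ↦ sum_sq_inner_le_of_orthogonal horth hnorm _
    _ = finrank ℝ K * r ^ 2 := by
        simp [Submodule.norm_coe, e.orthonormal.1]

end Bessel

theorem sum_coe_units_mul_coe_units_eq_zero {ι : Type*} [Fintype ι] [DecidableEq ι] {i j : ι}
    (hij : i ≠ j) : ∑ ε : ι → ℤˣ, (ε i : ℤ) * ε j = 0 := by
  let flip := Equiv.mulLeft (Pi.mulSingle i (-1) : ι → ℤˣ)
  have hflip : ∀ ε : ι → ℤˣ, ((flip ε) i : ℤ) * (flip ε) j = -((ε i : ℤ) * ε j) := fun ε ↦ by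
    simp [flip, hij.symm]
  have h := Equiv.sum_comp flip fun ε : ι → ℤˣ ↦ (ε i : ℤ) * ε j
  simp only [hflip, Finset.sum_neg_distrib] at h
  omega

theorem MulAction.card_nsmul_sum_smul_eq_card_nsmul_sum {G α M : Type*} [Group G] [Fintype G]
    [MulAction G α] [Fintype α] [IsPretransitive G α] [AddCommMonoid M] (f : α → M) (a : α) :
    Fintype.card α • ∑ g : G, f (g • a) = Fintype.card G • ∑ x, f x := by
  have hconst : ∀ x : α, ∑ g : G, f (g • x) = ∑ g : G, f (g • a) := fun x ↦ by
    obtain ⟨τ, rfl⟩ := exists_smul_eq G a x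
    simp_rw [smul_smul]
    exact Equiv.sum_comp (Equiv.mulRight τ) fun g ↦ f (g • a)
  calc Fintype.card α • ∑ g : G, f (g • a) = ∑ x : α, ∑ g : G, f (g • x) := by
        simp [hconst]
    _ = ∑ g : G, ∑ x, f (g • x) := Finset.sum_comm
    _ = ∑ _g : G, ∑ x, f x := by
        simp_rw [← MulAction.toPerm_apply, Equiv.sum_comp]
    _ = Fintype.card G • ∑ x, f x := by simp

section SignedPermutations

open Equiv

variable {N : ℕ} {H : Subgroup (Perm (Fin N))} [Fintype H] {b : Fin N → ℝ}
  {φ : Fin N → EuclideanSpace ℝ (H × (Fin N → ℤˣ))}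

theorem inner_eq_zero_of_signed_coord
    (hφ : ∀ i g, φ i g = ((g.2 i : ℤ) : ℝ) * b ((g.1 : Perm (Fin N)) i)) {i j : Fin N}
    (hij : i ≠ j) : ⟪φ i, φ j⟫ = 0 := by
  have hsigns : ∀ σ : H, ∑ ε : Fin N → ℤˣ, φ j (σ, ε) * φ i (σ, ε) = 0 := fun σ ↦ by
    simp_rw [hφ, mul_mul_mul_comm, ← Finset.sum_mul, ← Int.cast_mul, ← Int.cast_sum,
      sum_coe_units_mul_coe_units_eq_zero hij.symm, Int.cast_zero, zero_mul]
  simp [PiLp.inner_apply, Fintype.sum_prod_type, hsigns]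

theorem natCast_mul_norm_sq_of_signed_coord [MulAction.IsPretransitive H (Fin N)]
    (hφ : ∀ i g, φ i g = ((g.2 i : ℤ) : ℝ) * b ((g.1 : Perm (Fin N)) i)) (i : Fin N) :
    N * ‖φ i‖ ^ 2 = Fintype.card (H × (Fin N → ℤˣ)) * ∑ l, b l ^ 2 := by
  have hsign_sq : ∀ u : ℤˣ, ((u : ℤ) : ℝ) ^ 2 = 1 := fun u ↦ by
    rw [← Int.cast_pow, ← Units.val_pow_eq_pow_val, Int.units_sq, Units.val_one, Int.cast_one]
  have horbit := MulAction.card_nsmul_sum_smul_eq_card_nsmul_sum (G := H) (fun l ↦ b l ^ 2) i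
  simp only [nsmul_eq_mul, Fintype.card_fin, Subgroup.smul_def, Perm.smul_def] at horbit
  simp only [EuclideanSpace.real_norm_sq_eq, Fintype.sum_prod_type, hφ, mul_pow, hsign_sq,
    one_mul, Finset.sum_const, Finset.card_univ, nsmul_eq_mul, ← Finset.mul_sum,
    Fintype.card_prod, Nat.cast_mul]
  rw [mul_left_comm, horbit]
  ring

end SignedPermutations

/-- Let `H ⊆ S_N` be a subgroup acting transitively on `{1,…,N}`, `G = H × {-1,1}^N`
acting on `ℝ^N` by `(σ,ε)(x)_i = ε_i x_{σ(i)}`, `b ∈ ℝ^N`, `φ_i(g) = (gb)_i`, and `P`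
the orthogonal projection in `L²(G)` (normalized counting measure) onto a subspace of
dimension at most `n`. Then `(∑_i ‖Pφ_i‖²_{L²(G)})^{1/2} ≤ n^{1/2}‖b‖₂/N^{1/2}`. -/
theorem stmt13 (N n : ℕ) (H : Subgroup (Equiv.Perm (Fin N))) [Fintype H]
    (htrans : ∀ i j : Fin N, ∃ σ ∈ H, σ i = j)
    (b : Fin N → ℝ)
    (K : Submodule ℝ (EuclideanSpace ℝ (H × (Fin N → ℤˣ))))
    (hK : Module.finrank ℝ K ≤ n)
    (φ : Fin N → EuclideanSpace ℝ (H × (Fin N → ℤˣ)))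
    (hφ : ∀ i g, φ i g = ((g.2 i : ℤ) : ℝ) * b ((g.1 : Equiv.Perm (Fin N)) i)) :
    Real.sqrt (∑ i : Fin N, (Fintype.card (H × (Fin N → ℤˣ)) : ℝ)⁻¹ *
        ∑ g, ((Submodule.orthogonalProjection K (φ i) : EuclideanSpace ℝ (H × (Fin N → ℤˣ))) g) ^ 2)
      ≤ Real.sqrt n * Real.sqrt (∑ l, (b l) ^ 2) / Real.sqrt N := by
  have : MulAction.IsPretransitive H (Fin N) :=
    ⟨fun i j ↦ let ⟨σ, hσ, hσij⟩ := htrans i j; ⟨⟨σ, hσ⟩, hσij⟩⟩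
  set c : ℝ := (Fintype.card (H × (Fin N → ℤˣ)) : ℝ)
  set S := ∑ l, b l ^ 2
  have hc : 0 < c := by positivity
  have hnorm : ∀ i, ‖φ i‖ = √(c * S / N) := fun i ↦ by
    have hN : (N : ℝ) ≠ 0 := by exact_mod_cast i.pos.ne'
    rw [← natCast_mul_norm_sq_of_signed_coord hφ i, mul_div_cancel_left₀ _ hN,
      Real.sqrt_sq (norm_nonneg _)]
  have hproj := sum_norm_sq_starProjection_le K
    (fun i j hij ↦ inner_eq_zero_of_signed_coord hφ hij) hnorm
  calc _ = √(c⁻¹ * ∑ i, ‖K.starProjection (φ i)‖ ^ 2) := by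
        simp_rw [EuclideanSpace.real_norm_sq_eq, Finset.mul_sum]; rfl
    _ ≤ √(c⁻¹ * (n * √(c * S / N) ^ 2)) := by
        gcongr
        exact hproj.trans (by gcongr)
    _ = √n * √S / √N := by
        rw [Real.sq_sqrt (by positivity), ← Real.sqrt_mul (by positivity),
          ← Real.sqrt_div' _ N.cast_nonneg]
        congr 1
        field_simp
end

section
/- Let X = (ℝ^N, ‖·‖_X) and Y = (ℝ^N, ‖·‖_Y) be finite-dimensional normed spaces with unit balls B_X, B_Y and dual unit balls B_{X*}, B_{Y*}. Then for all n with 0 ≤ n ≤ N, the Kolmogorov width d_n(B_X, Y) := inf_{L, dim L ≤ n} sup_{x∈B_X} inf_{y∈L} ‖x−y‖_Y equals the Gelfand width d^n(B_{Y*}, X*) := inf over n-codimensional kernels of n functionals of sup of ‖·‖_{X*} over B_{Y*} intersected with the kernel. -/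
open Module Submodule

namespace IT16

variable {N : ℕ}

/-- standard basis vector, in the form used by `LinearMap.pi_apply_eq_sum_univ`. -/
def ee (N : ℕ) (i : Fin N) : Fin N → ℝ := fun j => if i = j then 1 else 0

/-- pairing with `w` as a linear map. -/
def pairLM (w : Fin N → ℝ) : (Fin N → ℝ) →ₗ[ℝ] ℝ where
  toFun x := ∑ j, w j * x j
  map_add' x y := by simp [mul_add, Finset.sum_add_distrib]
  map_smul' a x := by simp [Finset.mul_sum]; ring_nf; simp [mul_comm, mul_left_comm]

section Norm

variable (nn : (Fin N → ℝ) → ℝ)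
  (h0 : ∀ x, nn x = 0 ↔ x = 0)
  (hs : ∀ (a : ℝ) (x), nn (a • x) = |a| * nn x)
  (ht : ∀ x y, nn (x + y) ≤ nn x + nn y)

include hs in
lemma nn_zero : nn 0 = 0 := by
  have := hs 0 0
  simpa using this

include hs ht in
lemma nn_nonneg (x) : 0 ≤ nn x := by
  have h1 := ht x ((-1 : ℝ) • x)
  have h2 := hs (-1) x
  have h3 : x + (-1 : ℝ) • x = 0 := by simp
  rw [h3, nn_zero nn hs] at h1
  rw [h2] at h1
  simp at h1
  linarith

include hs ht in
lemma nn_sum {ι : Type*} (s : Finset ι) (g : ι → (Fin N → ℝ)) :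
    nn (∑ i ∈ s, g i) ≤ ∑ i ∈ s, nn (g i) := by
  classical
  induction s using Finset.induction with
  | empty => simp [nn_zero nn hs]
  | insert _ _ hx ih =>
    rw [Finset.sum_insert hx, Finset.sum_insert hx]
    exact (ht _ _).trans (by linarith)

include hs ht in
lemma nn_expand (x : Fin N → ℝ) : nn x ≤ ∑ i, |x i| * nn (ee N i) := by
  classical
  conv_lhs => rw [pi_eq_sum_univ x]
  refine (nn_sum nn hs ht _ _).trans ?_
  refine Finset.sum_le_sum fun i _ => ?_
  rw [hs]
  exact le_of_eq rfl

include h0 hs ht in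
lemma nn_lower : ∃ m > 0, ∀ z, m * ‖z‖ ≤ nn z := by
  rcases Nat.eq_zero_or_pos N with hN | hN
  · refine ⟨1, one_pos, fun z => ?_⟩
    subst hN
    have hz : z = 0 := Subsingleton.elim z 0
    rw [hz, nn_zero nn hs, norm_zero, mul_zero]
  · haveI : NeZero N := ⟨hN.ne'⟩
    set K : ℝ := ∑ i, nn (ee N i) with hK
    have hcont : Continuous nn := by
      have hlip : ∀ a b, dist (nn a) (nn b) ≤ K * dist a b := by
        intro a b
        have key : ∀ a b : Fin N → ℝ, nn a - nn b ≤ K * dist a b := by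
          intro a b
          have h1 : nn a ≤ nn b + nn (a - b) := by
            have := ht (a - b) b
            calc nn a = nn (a - b + b) := by rw [sub_add_cancel]
              _ ≤ nn (a - b) + nn b := this
              _ = nn b + nn (a - b) := add_comm _ _
          have h2 : nn (a - b) ≤ K * dist a b := by
            refine (nn_expand nn hs ht (a - b)).trans ?_
            rw [hK, Finset.sum_mul]
            refine Finset.sum_le_sum fun i _ => ?_
            have hcoord : |(a - b) i| ≤ dist a b := by
              have := norm_le_pi_norm (a - b) i
              simpa [Real.norm_eq_abs, dist_eq_norm] using this
            have := nn_nonneg nn hs ht (ee N i)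
            calc |(a - b) i| * nn (ee N i) ≤ dist a b * nn (ee N i) :=
                  mul_le_mul_of_nonneg_right hcoord this
              _ = nn (ee N i) * dist a b := mul_comm _ _
          linarith
        rw [Real.dist_eq, abs_sub_le_iff]
        exact ⟨key a b, by simpa [dist_comm] using key b a⟩
      refine (LipschitzWith.of_dist_le_mul (K := ⟨max K 0, le_max_right _ _⟩) ?_).continuous
      intro a b
      exact (hlip a b).trans (by
        have : K ≤ max K 0 := le_max_left _ _
        exact mul_le_mul_of_nonneg_right this dist_nonneg)
    have hsne : (Metric.sphere (0 : Fin N → ℝ) 1).Nonempty := by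
      refine ⟨fun _ => 1, ?_⟩
      have : ‖(fun _ => (1:ℝ) : Fin N → ℝ)‖ = ‖(1:ℝ)‖ := pi_norm_const (1:ℝ)
      simp only [Metric.mem_sphere, dist_zero_right]
      rw [this]; simp
    obtain ⟨w, hw, hmin⟩ := (isCompact_sphere (0 : Fin N → ℝ) 1).exists_isMinOn hsne
      hcont.continuousOn
    have hwn : ‖w‖ = 1 := by simpa using hw
    have hw0 : w ≠ 0 := by
      intro h
      rw [h] at hwn
      simp at hwn
    have hm : 0 < nn w := by
      rcases (nn_nonneg nn hs ht w).lt_or_eq with h | h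
      · exact h
      · exact absurd ((h0 w).1 h.symm) hw0
    refine ⟨nn w, hm, fun z => ?_⟩
    rcases eq_or_ne z 0 with rfl | hz
    · simp [nn_zero nn hs]
    · have hzn : ‖z‖ ≠ 0 := norm_ne_zero_iff.2 hz
      set u : Fin N → ℝ := ‖z‖⁻¹ • z with hu
      have hun : ‖u‖ = 1 := by
        rw [hu, norm_smul, norm_inv, norm_norm, inv_mul_cancel₀ hzn]
      have husph : u ∈ Metric.sphere (0 : Fin N → ℝ) 1 := by simpa using hun
      have h1 : nn w ≤ nn u := hmin husph
      have h2 : nn z = ‖z‖ * nn u := by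
        conv_lhs => rw [show z = ‖z‖ • u by rw [hu, smul_smul, mul_inv_cancel₀ hzn, one_smul]]
        rw [hs, abs_of_nonneg (norm_nonneg z)]
      rw [h2, mul_comm (nn w) ‖z‖]
      exact mul_le_mul_of_nonneg_left h1 (norm_nonneg z)

include h0 hs ht in
lemma coord_bound : ∃ c > 0, ∀ (z : Fin N → ℝ) (i), |z i| ≤ c * nn z := by
  obtain ⟨m, hm, hlow⟩ := nn_lower nn h0 hs ht
  refine ⟨m⁻¹, inv_pos.2 hm, fun z i => ?_⟩
  have h1 : |z i| ≤ ‖z‖ := by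
    have := norm_le_pi_norm z i
    simpa [Real.norm_eq_abs] using this
  have h2 : ‖z‖ ≤ m⁻¹ * nn z := by
    rw [le_inv_mul_iff₀ hm]
    exact hlow z
  linarith

end Norm

section Dual

variable (nn : (Fin N → ℝ) → ℝ)
  (h0 : ∀ x, nn x = 0 ↔ x = 0)
  (hs : ∀ (a : ℝ) (x), nn (a • x) = |a| * nn x)
  (ht : ∀ x y, nn (x + y) ≤ nn x + nn y)

/-- the dual set whose sup is the dual norm -/
def dualSet (x : Fin N → ℝ) : Set ℝ := {t : ℝ | ∃ z, nn z ≤ 1 ∧ t = ∑ i, z i * x i}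

noncomputable def dualN (x : Fin N → ℝ) : ℝ := sSup (dualSet nn x)

include hs in
lemma mem_dualSet_zero (x) : (0 : ℝ) ∈ dualSet nn x :=
  ⟨0, by rw [nn_zero nn hs]; norm_num, by simp⟩

lemma dualSet_le {c : ℝ} (hc : 0 < c) (hcoord : ∀ (z : Fin N → ℝ) (i), |z i| ≤ c * nn z)
    (x : Fin N → ℝ) : ∀ t ∈ dualSet nn x, t ≤ c * ∑ i, |x i| := by
  rintro t ⟨z, hz, rfl⟩
  calc ∑ i, z i * x i ≤ ∑ i, |z i * x i| := Finset.sum_le_sum fun i _ => le_abs_self _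
    _ ≤ ∑ i, c * |x i| := by
        refine Finset.sum_le_sum fun i _ => ?_
        rw [abs_mul]
        refine mul_le_mul ?_ le_rfl (abs_nonneg _) hc.le
        exact (hcoord z i).trans (by nlinarith)
    _ = c * ∑ i, |x i| := (Finset.mul_sum _ _ _).symm

lemma dualSet_bddAbove {c : ℝ} (hc : 0 < c) (hcoord : ∀ (z : Fin N → ℝ) (i), |z i| ≤ c * nn z)
    (x : Fin N → ℝ) : BddAbove (dualSet nn x) :=
  ⟨c * ∑ i, |x i|, fun t ht' => dualSet_le nn hc hcoord x t ht'⟩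

include hs in
lemma dualN_le {c : ℝ} (hc : 0 < c) (hcoord : ∀ (z : Fin N → ℝ) (i), |z i| ≤ c * nn z)
    (x : Fin N → ℝ) : dualN nn x ≤ c * ∑ i, |x i| :=
  csSup_le ⟨0, mem_dualSet_zero nn hs x⟩ (dualSet_le nn hc hcoord x)

include h0 hs ht in
lemma dualN_nonneg (x) : 0 ≤ dualN nn x := by
  obtain ⟨c, hc, hcoord⟩ := coord_bound nn h0 hs ht
  exact le_csSup (dualSet_bddAbove nn hc hcoord x) (mem_dualSet_zero nn hs x)

include h0 hs ht in
lemma pair_le_dualN {z x : Fin N → ℝ} (hz : nn z ≤ 1) : ∑ i, z i * x i ≤ dualN nn x := by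
  obtain ⟨c, hc, hcoord⟩ := coord_bound nn h0 hs ht
  exact le_csSup (dualSet_bddAbove nn hc hcoord x) ⟨z, hz, rfl⟩

include h0 hs ht in
lemma pair_le_mul_dualN (z x : Fin N → ℝ) : ∑ i, z i * x i ≤ nn z * dualN nn x := by
  rcases eq_or_lt_of_le (nn_nonneg nn hs ht z) with h | h
  · have hz0 : z = 0 := (h0 z).1 h.symm
    have hsum : ∑ i, z i * x i = 0 := by rw [hz0]; simp
    rw [hsum, hz0, nn_zero nn hs, zero_mul]
  · have h1 : nn ((nn z)⁻¹ • z) ≤ 1 := by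
      rw [hs, abs_of_pos (inv_pos.2 h), inv_mul_cancel₀ h.ne']
    have h2 := pair_le_dualN nn h0 hs ht (x := x) h1
    have h3 : ∑ i, ((nn z)⁻¹ • z) i * x i = (nn z)⁻¹ * ∑ i, z i * x i := by
      rw [Finset.mul_sum]
      exact Finset.sum_congr rfl fun i _ => by simp [mul_assoc]
    rw [h3] at h2
    calc ∑ i, z i * x i = nn z * ((nn z)⁻¹ * ∑ i, z i * x i) := by
          rw [← mul_assoc, mul_inv_cancel₀ h.ne', one_mul]
      _ ≤ nn z * dualN nn x := mul_le_mul_of_nonneg_left h2 h.le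

include h0 hs ht in
lemma dualN_coord (x : Fin N → ℝ) (i : Fin N) : |x i| ≤ nn (ee N i) * dualN nn x := by
  have hee : ee N i ≠ 0 := by
    intro h
    have := congrFun h i
    simp [ee] at this
  have hpos : 0 < nn (ee N i) := by
    rcases eq_or_lt_of_le (nn_nonneg nn hs ht (ee N i)) with h | h
    · exact absurd ((h0 _).1 h.symm) hee
    · exact h
  set s : ℝ := if x i < 0 then -1 else 1 with hsdef
  have habs : s * x i = |x i| := by
    rcases lt_or_ge (x i) 0 with h | h
    · rw [hsdef, if_pos h, abs_of_neg h]; ring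
    · rw [hsdef, if_neg (not_lt.2 h), abs_of_nonneg h]; ring
  have hab : |s * (nn (ee N i))⁻¹| = (nn (ee N i))⁻¹ := by
    rw [abs_mul, abs_inv, abs_of_pos hpos]
    rcases lt_or_ge (x i) 0 with h | h
    · rw [hsdef, if_pos h]; norm_num
    · rw [hsdef, if_neg (not_lt.2 h)]; norm_num
  have h1 : nn ((s * (nn (ee N i))⁻¹) • ee N i) ≤ 1 := by
    rw [hs, hab, inv_mul_cancel₀ hpos.ne']
  have h2 := pair_le_dualN nn h0 hs ht (x := x) h1
  have h3 : ∑ j, ((s * (nn (ee N i))⁻¹) • ee N i) j * x j = (nn (ee N i))⁻¹ * |x i| := by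
    rw [Finset.sum_eq_single i]
    · have h4 : ee N i i = 1 := by simp [ee]
      simp only [Pi.smul_apply, smul_eq_mul, h4, mul_one]
      rw [show s * (nn (ee N i))⁻¹ * x i = (nn (ee N i))⁻¹ * (s * x i) by ring, habs]
    · intro j _ hj
      simp [ee, Ne.symm hj]
    · intro h; exact absurd (Finset.mem_univ i) h
  rw [h3] at h2
  calc |x i| = nn (ee N i) * ((nn (ee N i))⁻¹ * |x i|) := by
        rw [← mul_assoc, mul_inv_cancel₀ hpos.ne', one_mul]
    _ ≤ nn (ee N i) * dualN nn x := mul_le_mul_of_nonneg_left h2 hpos.le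

end Dual

section HB

variable (nn : (Fin N → ℝ) → ℝ)
  (h0 : ∀ x, nn x = 0 ↔ x = 0)
  (hs : ∀ (a : ℝ) (x), nn (a • x) = |a| * nn x)
  (ht : ∀ x y, nn (x + y) ≤ nn x + nn y)

include hs ht in
/-- Hahn–Banach: a norming functional for the distance to a subspace. -/
lemma exists_dist_functional (L : Submodule ℝ (Fin N → ℝ)) (x : Fin N → ℝ) :
    ∃ g : (Fin N → ℝ) →ₗ[ℝ] ℝ, (∀ z, g z ≤ nn z) ∧ (∀ y ∈ L, g y = 0) ∧
      g x = ⨅ y : L, nn (x - y.1) := by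
  set d : ℝ := ⨅ y : L, nn (x - y.1) with hd
  have hbdd : BddBelow (Set.range fun y : L => nn (x - y.1)) :=
    ⟨0, by rintro _ ⟨y, rfl⟩; exact nn_nonneg nn hs ht _⟩
  have hdle : ∀ y ∈ L, d ≤ nn (x - y) := fun y hy => ciInf_le hbdd ⟨y, hy⟩
  have hd0 : 0 ≤ d := le_ciInf fun y => nn_nonneg nn hs ht _
  by_cases hx : x ∈ L
  · have hdz : d = 0 := by
      have h1 := hdle x hx
      rw [sub_self, nn_zero nn hs] at h1
      exact le_antisymm h1 hd0
    exact ⟨0, fun z => by simpa using nn_nonneg nn hs ht z, fun y _ => rfl, by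
      simp [hdz]⟩
  · set f0 : (Fin N → ℝ) →ₗ.[ℝ] ℝ := ⟨L, 0⟩ with hf0
    have hxd : x ∉ f0.domain := hx
    set F := f0.supSpanSingleton x d hxd with hF
    have hFval : ∀ (y : Fin N → ℝ) (hy : y ∈ L) (t : ℝ) (hmem : y + t • x ∈ F.domain),
        F ⟨y + t • x, hmem⟩ = t * d := by
      intro y hy t hmem
      have h5 := LinearPMap.supSpanSingleton_apply_mk f0 x d hxd y hy t
      calc F ⟨y + t • x, hmem⟩ = f0 ⟨y, hy⟩ + t • d := h5
        _ = t * d := by rw [show f0 ⟨y, hy⟩ = 0 from rfl]; simp [smul_eq_mul]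
    have hfle : ∀ w : F.domain, F w ≤ nn w := by
      rintro ⟨w, hw⟩
      have hw' : w ∈ f0.domain ⊔ (ℝ ∙ x) := by
        rw [← LinearPMap.domain_supSpanSingleton f0 x d hxd]; exact hw
      obtain ⟨y, hy, z, hz, rfl⟩ := Submodule.mem_sup.1 hw'
      obtain ⟨t, rfl⟩ := Submodule.mem_span_singleton.1 hz
      rw [hFval y hy t hw]
      rcases le_or_gt t 0 with htle | htpos
      · exact (mul_nonpos_of_nonpos_of_nonneg htle hd0).trans (nn_nonneg nn hs ht _)
      · have hyl : -(t⁻¹ • y) ∈ L := L.neg_mem (L.smul_mem _ hy)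
        have h1 : d ≤ nn (x - -(t⁻¹ • y)) := hdle _ hyl
        have h2 : x - -(t⁻¹ • y) = x + t⁻¹ • y := by abel
        rw [h2] at h1
        have h3 : t * nn (x + t⁻¹ • y) = nn (y + t • x) := by
          rw [show y + t • x = t • (x + t⁻¹ • y) by
            rw [smul_add, smul_smul, mul_inv_cancel₀ htpos.ne', one_smul]; abel]
          rw [hs, abs_of_pos htpos]
        calc t * d ≤ t * nn (x + t⁻¹ • y) := mul_le_mul_of_nonneg_left h1 htpos.le
          _ = nn (y + t • x) := h3
    obtain ⟨g, hg_eq, hg_le⟩ := exists_extension_of_le_sublinear F nn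
      (fun c hc z => by rw [hs, abs_of_pos hc]) ht hfle
    refine ⟨g, hg_le, ?_, ?_⟩
    · intro y hy
      have hmem : y + (0:ℝ) • x ∈ F.domain := by
        rw [hF, LinearPMap.domain_supSpanSingleton]
        exact Submodule.mem_sup_left (by simpa [hf0] using hy)
      have := hg_eq ⟨y + (0:ℝ) • x, hmem⟩
      rw [hFval y hy 0 hmem] at this
      simpa using this
    · have hmem : (0 : Fin N → ℝ) + (1:ℝ) • x ∈ F.domain := by
        rw [hF, LinearPMap.domain_supSpanSingleton]
        exact Submodule.mem_sup_right (Submodule.mem_span_singleton.2 ⟨1, by simp⟩)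
      have := hg_eq ⟨(0 : Fin N → ℝ) + (1:ℝ) • x, hmem⟩
      rw [hFval 0 L.zero_mem 1 hmem] at this
      simpa using this

end HB

/-- a submodule of finrank ≤ n is the span of n vectors -/
lemma exists_span_fin (n : ℕ) (L : Submodule ℝ (Fin N → ℝ)) (hL : finrank ℝ L ≤ n) :
    ∃ v : Fin n → (Fin N → ℝ), Submodule.span ℝ (Set.range v) = L := by
  classical
  set d := finrank ℝ L with hd
  let b := Module.finBasis ℝ L
  set v : Fin n → (Fin N → ℝ) := fun i => if h : (i : ℕ) < d then (b ⟨i, h⟩ : Fin N → ℝ) else 0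
    with hv
  refine ⟨v, le_antisymm ?_ ?_⟩
  · rw [Submodule.span_le]
    rintro _ ⟨i, rfl⟩
    by_cases h : (i : ℕ) < d
    · simp only [hv, dif_pos h]
      exact (b ⟨i, h⟩).2
    · simp only [hv, dif_neg h]
      exact L.zero_mem
  · intro w hw
    have h1 : (⟨w, hw⟩ : L) ∈ Submodule.span ℝ (Set.range b) := by
      rw [b.span_eq]; trivial
    have h2 : w ∈ Submodule.map L.subtype (Submodule.span ℝ (Set.range b)) :=
      ⟨⟨w, hw⟩, h1, rfl⟩
    rw [Submodule.map_span] at h2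
    refine Submodule.span_mono ?_ h2
    rintro _ ⟨_, ⟨j, rfl⟩, rfl⟩
    refine ⟨⟨(j : ℕ), lt_of_lt_of_le j.2 hL⟩, ?_⟩
    have hjd : ((⟨(j : ℕ), lt_of_lt_of_le j.2 hL⟩ : Fin n) : ℕ) < d := j.2
    simp only [hv, dif_pos hjd]
    congr

end IT16

set_option maxHeartbeats 1000000 in
set_option linter.unusedVariables false in
open IT16 in
/-- Ioffe–Tikhomirov duality in finite dimensions: for norms `nX`, `nY` on `ℝ^N` and
`0 ≤ n ≤ N`, the Kolmogorov width `d_n(B_X, Y)` equals the Gelfand width `d^n(B_{Y*}, X*)`,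
where dual norms are taken with respect to the standard pairing. -/
theorem stmt16 (N n : ℕ) (hn : n ≤ N)
    (nX nY : (Fin N → ℝ) → ℝ)
    (hX0 : ∀ x, nX x = 0 ↔ x = 0)
    (hXs : ∀ (a : ℝ) (x), nX (a • x) = |a| * nX x)
    (hXt : ∀ x y, nX (x + y) ≤ nX x + nX y)
    (hY0 : ∀ x, nY x = 0 ↔ x = 0)
    (hYs : ∀ (a : ℝ) (x), nY (a • x) = |a| * nY x)
    (hYt : ∀ x y, nY (x + y) ≤ nY x + nY y) :
    (⨅ L : {L : Submodule ℝ (Fin N → ℝ) // Module.finrank ℝ L ≤ n},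
        ⨆ x : {x : Fin N → ℝ // nX x ≤ 1}, ⨅ y : L.1, nY (x.1 - y.1)) =
    (⨅ f : Fin n → ((Fin N → ℝ) →ₗ[ℝ] ℝ),
        ⨆ x : {x : Fin N → ℝ //
            sSup {t : ℝ | ∃ z, nY z ≤ 1 ∧ t = ∑ i, z i * x i} ≤ 1 ∧ ∀ i, f i x = 0},
        sSup {t : ℝ | ∃ z, nX z ≤ 1 ∧ t = ∑ i, z i * x.1 i}) := by
  classical
  obtain ⟨cX, hcX, hcoordX⟩ := coord_bound nX hX0 hXs hXt
  obtain ⟨cY, hcY, hcoordY⟩ := coord_bound nY hY0 hYs hYt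
  show (⨅ L : {L : Submodule ℝ (Fin N → ℝ) // Module.finrank ℝ L ≤ n},
        ⨆ x : {x : Fin N → ℝ // nX x ≤ 1}, ⨅ y : L.1, nY (x.1 - y.1)) =
    (⨅ f : Fin n → ((Fin N → ℝ) →ₗ[ℝ] ℝ),
        ⨆ x : {x : Fin N → ℝ // dualN nY x ≤ 1 ∧ ∀ i, f i x = 0},
        dualN nX x.1)
  haveI instL : Nonempty {L : Submodule ℝ (Fin N → ℝ) // Module.finrank ℝ L ≤ n} :=
    ⟨⟨⊥, by simp⟩⟩
  haveI instBX : Nonempty {x : Fin N → ℝ // nX x ≤ 1} :=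
    ⟨⟨0, by rw [nn_zero nX hXs]; norm_num⟩⟩
  haveI instBYd : ∀ f : Fin n → ((Fin N → ℝ) →ₗ[ℝ] ℝ),
      Nonempty {x : Fin N → ℝ // dualN nY x ≤ 1 ∧ ∀ i, f i x = 0} := by
    intro f
    refine ⟨⟨0, ?_, fun i => map_zero (f i)⟩⟩
    refine (dualN_le nY hYs hcY hcoordY 0).trans ?_
    simp
  -- bddBelow for inner infima
  have hbddlow : ∀ (L : Submodule ℝ (Fin N → ℝ)) (w : Fin N → ℝ),
      BddBelow (Set.range fun y : L => nY (w - y.1)) := by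
    intro L w
    exact ⟨0, by rintro _ ⟨y, rfl⟩; exact nn_nonneg nY hYs hYt _⟩
  -- upper bound for the Kolmogorov sup family
  have hKolBdd : ∀ L : Submodule ℝ (Fin N → ℝ),
      BddAbove (Set.range fun x : {x : Fin N → ℝ // nX x ≤ 1} =>
        ⨅ y : L, nY (x.1 - y.1)) := by
    intro L
    refine ⟨cX * ∑ i, nY (ee N i), ?_⟩
    rintro _ ⟨x, rfl⟩
    have hd1 : (⨅ y : L, nY (x.1 - y.1)) ≤ nY x.1 := by
      have := ciInf_le (hbddlow L x.1) (⟨0, L.zero_mem⟩ : L)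
      simpa using this
    refine hd1.trans ?_
    refine (nn_expand nY hYs hYt x.1).trans ?_
    rw [Finset.mul_sum]
    refine Finset.sum_le_sum fun i _ => ?_
    have h1 : |x.1 i| ≤ cX := (hcoordX x.1 i).trans (by nlinarith [x.2])
    exact mul_le_mul_of_nonneg_right h1 (nn_nonneg nY hYs hYt _)
  -- nonnegativity of the Kolmogorov sup
  have hKolNonneg : ∀ L : Submodule ℝ (Fin N → ℝ),
      0 ≤ ⨆ x : {x : Fin N → ℝ // nX x ≤ 1}, ⨅ y : L, nY (x.1 - y.1) := by
    intro L
    exact Real.iSup_nonneg fun x => Real.iInf_nonneg fun y => nn_nonneg nY hYs hYt _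
  refine le_antisymm (le_ciInf fun f => ?_) (le_ciInf fun L => ?_)
  · -- Kolmogorov ≤ Gelfand term for f
    set v : Fin n → (Fin N → ℝ) := fun i j => f i (ee N j) with hv
    set L : Submodule ℝ (Fin N → ℝ) := Submodule.span ℝ (Set.range v) with hL
    have hLrank : Module.finrank ℝ L ≤ n := by
      have := finrank_range_le_card (R := ℝ) v
      simpa [Set.finrank] using this
    have h1 : (⨅ L : {L : Submodule ℝ (Fin N → ℝ) // Module.finrank ℝ L ≤ n},
        ⨆ x : {x : Fin N → ℝ // nX x ≤ 1}, ⨅ y : L.1, nY (x.1 - y.1)) ≤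
        ⨆ x : {x : Fin N → ℝ // nX x ≤ 1}, ⨅ y : L, nY (x.1 - y.1) :=
      ciInf_le (f := fun L' : {L : Submodule ℝ (Fin N → ℝ) // Module.finrank ℝ L ≤ n} =>
        ⨆ x : {x : Fin N → ℝ // nX x ≤ 1}, ⨅ y : L'.1, nY (x.1 - y.1))
        ⟨0, by rintro _ ⟨K, rfl⟩; exact hKolNonneg K.1⟩ ⟨L, hLrank⟩
    refine h1.trans ?_
    refine ciSup_le fun x => ?_
    obtain ⟨g, hg_le, hgL, hgx⟩ := exists_dist_functional nY hYs hYt L x.1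
    set G : Fin N → ℝ := fun j => g (ee N j) with hG
    have hrepr : ∀ h : (Fin N → ℝ) →ₗ[ℝ] ℝ, ∀ z, h z = ∑ j, z j * h (ee N j) := by
      intro h z
      rw [LinearMap.pi_apply_eq_sum_univ h z]
      exact Finset.sum_congr rfl fun j _ => by rw [smul_eq_mul]; rfl
    have hDYG : dualN nY G ≤ 1 := by
      refine csSup_le ⟨0, mem_dualSet_zero nY hYs G⟩ ?_
      rintro t ⟨z, hz, rfl⟩
      have : ∑ i, z i * G i = g z := (hrepr g z).symm
      rw [this]
      exact (hg_le z).trans hz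
    have hker : ∀ i, f i G = 0 := by
      intro i
      have h2 : g (v i) = 0 := hgL _ (Submodule.subset_span ⟨i, rfl⟩)
      have h3 : f i G = ∑ j, G j * v i j := by
        rw [hrepr (f i) G]
      have h4 : (∑ j, G j * v i j) = ∑ j, v i j * G j :=
        Finset.sum_congr rfl fun j _ => mul_comm _ _
      rw [h3, h4, ← hrepr g (v i), h2]
    have hd_le : (⨅ y : L, nY (x.1 - y.1)) ≤ dualN nX G := by
      rw [← hgx, hrepr g x.1]
      exact le_csSup (dualSet_bddAbove nX hcX hcoordX G) ⟨x.1, x.2, rfl⟩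
    refine hd_le.trans ?_
    have hBdd : BddAbove (Set.range fun x : {x : Fin N → ℝ //
        dualN nY x ≤ 1 ∧ ∀ i, f i x = 0} => dualN nX x.1) := by
      refine ⟨cX * ∑ i, nY (ee N i), ?_⟩
      rintro _ ⟨x, rfl⟩
      refine (dualN_le nX hXs hcX hcoordX x.1).trans ?_
      refine mul_le_mul_of_nonneg_left ?_ hcX.le
      refine Finset.sum_le_sum fun i _ => ?_
      refine (dualN_coord nY hY0 hYs hYt x.1 i).trans ?_
      calc nY (ee N i) * dualN nY x.1 ≤ nY (ee N i) * 1 :=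
            mul_le_mul_of_nonneg_left x.2.1 (nn_nonneg nY hYs hYt _)
        _ = nY (ee N i) := mul_one _
    exact le_ciSup (f := fun x : {x : Fin N → ℝ //
      dualN nY x ≤ 1 ∧ ∀ i, f i x = 0} => dualN nX x.1) hBdd ⟨G, hDYG, hker⟩
  · -- Gelfand ≤ Kolmogorov term for L
    obtain ⟨v, hv⟩ := exists_span_fin n L.1 L.2
    set f : Fin n → ((Fin N → ℝ) →ₗ[ℝ] ℝ) := fun i => pairLM (v i) with hf
    have h1 : (⨅ f : Fin n → ((Fin N → ℝ) →ₗ[ℝ] ℝ),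
        ⨆ x : {x : Fin N → ℝ // dualN nY x ≤ 1 ∧ ∀ i, f i x = 0},
        dualN nX x.1) ≤
        ⨆ x : {x : Fin N → ℝ // dualN nY x ≤ 1 ∧ ∀ i, f i x = 0}, dualN nX x.1 := by
      refine ciInf_le (f := fun f' : Fin n → ((Fin N → ℝ) →ₗ[ℝ] ℝ) =>
        ⨆ x : {x : Fin N → ℝ // dualN nY x ≤ 1 ∧ ∀ i, f' i x = 0}, dualN nX x.1) ⟨0, ?_⟩ f
      rintro _ ⟨f', rfl⟩
      exact Real.iSup_nonneg fun x => dualN_nonneg nX hX0 hXs hXt x.1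
    refine h1.trans ?_
    refine ciSup_le fun x => ?_
    refine csSup_le ⟨0, mem_dualSet_zero nX hXs x.1⟩ ?_
    rintro t ⟨z, hz, rfl⟩
    have hperp : ∀ y ∈ L.1, ∑ i, y i * x.1 i = 0 := by
      intro y hy
      have hy' : y ∈ Submodule.span ℝ (Set.range v) := hv ▸ hy
      have hsub : Submodule.span ℝ (Set.range v) ≤ LinearMap.ker (pairLM x.1) := by
        rw [Submodule.span_le]
        rintro _ ⟨i, rfl⟩
        rw [SetLike.mem_coe, LinearMap.mem_ker]
        have h7 : (∑ j, v i j * x.1 j) = 0 := x.2.2 i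
        have h6 : pairLM x.1 (v i) = ∑ j, x.1 j * v i j := rfl
        rw [h6, Finset.sum_congr rfl fun j _ => mul_comm (x.1 j) (v i j), h7]
      have h8 : pairLM x.1 y = 0 := hsub hy'
      have h9 : pairLM x.1 y = ∑ j, x.1 j * y j := rfl
      rw [h9] at h8
      rw [Finset.sum_congr rfl fun j _ => mul_comm (y j) (x.1 j), h8]
    have h2 : ∑ i, z i * x.1 i ≤ ⨅ y : L.1, nY (z - y.1) := by
      refine le_ciInf fun y => ?_
      have e1 : ∑ i, z i * x.1 i = ∑ i, (z - y.1) i * x.1 i := by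
        have : ∑ i, (z - y.1) i * x.1 i = ∑ i, (z i * x.1 i - y.1 i * x.1 i) :=
          Finset.sum_congr rfl fun i _ => by simp [sub_mul]
        rw [this, Finset.sum_sub_distrib, hperp y.1 y.2, sub_zero]
      rw [e1]
      calc ∑ i, (z - y.1) i * x.1 i ≤ nY (z - y.1) * dualN nY x.1 :=
            pair_le_mul_dualN nY hY0 hYs hYt _ _
        _ ≤ nY (z - y.1) * 1 :=
            mul_le_mul_of_nonneg_left x.2.1 (nn_nonneg nY hYs hYt _)
        _ = nY (z - y.1) := mul_one _
    refine h2.trans ?_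
    exact le_ciSup (f := fun x : {x : Fin N → ℝ // nX x ≤ 1} =>
      ⨅ y : L.1, nY (x.1 - y.1)) (hKolBdd L.1) ⟨z, hz⟩
end
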